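/- arXiv:math/9910156 — 2 statements merged into one kernel-verified Lean document; each statement's English description precedes it below -/
import Mathlib

section
/- Let m, k ∈ ℕ and s ∈ ℂ satisfy 2·Re(s) + m > k. Then the function f : ℂ → ℂ defined by f(t) = (|t|²)^s · t^m for t ≠ 0 and f(0) = 0 is of class C^k on ℂ (i.e. k times continuously differentiable in the real sense). The same holds for the function t ↦ (|t|²)^s · t̄^m. -/
/-!
Consider the family `G_{s,m,n}(t) = (|t|²)^s t^m t̄^n`, set to `0` at the origin, so that
`|G_{s,m,n}(t)| = |t|^(2 Re s + m + n)`. Away from the origin the product rule and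
`|t|² = t t̄` give
`dG_{s,m,n} = (s + m) G_{s-1,m,n+1} dt + (s + n) G_{s-1,m+1,n} dt̄`,
and at the origin the same formula holds (both sides vanish) as soon as the exponent exceeds `1`,
because then `G_{s,m,n}(t) = o(|t|)`. The coefficients are again members of the family, with
exponent lowered by exactly one, so induction on `k` shows that `G_{s,m,n}` is `C^k` whenever
`2 Re s + m + n > k`. The two kernels of the theorem are `G_{s,m,0}` and `G_{s,0,m}`.
-/

open Complex ComplexConjugate Asymptotics Filter Topology

section RpowOrder

variable {E F : Type*} [NormedAddCommGroup E] [NormedAddCommGroup F] {e : ℝ}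

theorem tendsto_norm_rpow_nhds_zero (he : 0 < e) :
    Tendsto (fun x : E => ‖x‖ ^ e) (𝓝 0) (𝓝 0) := by
  have hcont : Continuous fun x : E => ‖x‖ ^ e := continuous_norm.rpow_const fun _ => Or.inr he.le
  simpa [Real.zero_rpow he.ne'] using hcont.tendsto 0

theorem isLittleO_norm_rpow_nhds_zero (he : 1 < e) :
    (fun x : E => ‖x‖ ^ e) =o[𝓝 0] fun x => x := by
  have hsmall : (fun x : E => ‖x‖ ^ (e - 1)) =o[𝓝 0] fun _ => (1 : ℝ) :=
    (isLittleO_one_iff ℝ).2 (tendsto_norm_rpow_nhds_zero (by linarith))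
  refine isLittleO_norm_right.1 <|
    (hsmall.mul_isBigO (isBigO_refl (fun x : E => ‖x‖) (𝓝 0))).congr' ?_ (by simp)
  filter_upwards [] with x
  rcases eq_or_ne x 0 with rfl | hx
  · simp [Real.zero_rpow (by linarith : e - 1 ≠ 0), Real.zero_rpow (by linarith : e ≠ 0)]
  · rw [← Real.rpow_add_one (norm_ne_zero_iff.2 hx), sub_add_cancel]

theorem continuousAt_zero_of_norm_le_rpow {f : E → F} (he : 0 < e) (hf : ∀ x, ‖f x‖ ≤ ‖x‖ ^ e) :
    ContinuousAt f 0 := by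
  have hf0 : f 0 = 0 := by simpa [Real.zero_rpow he.ne'] using hf 0
  rw [ContinuousAt, hf0]
  exact squeeze_zero_norm hf (tendsto_norm_rpow_nhds_zero he)

theorem hasFDerivAt_zero_of_norm_le_rpow {𝕜 : Type*} [NontriviallyNormedField 𝕜]
    [NormedSpace 𝕜 E] [NormedSpace 𝕜 F] {f : E → F} (he : 1 < e) (hf : ∀ x, ‖f x‖ ≤ ‖x‖ ^ e) :
    HasFDerivAt f (0 : E →L[𝕜] F) 0 := by
  have hf0 : f 0 = 0 := by simpa [Real.zero_rpow (by linarith : e ≠ 0)] using hf 0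
  have hO : f =O[𝓝 0] fun x => ‖x‖ ^ e :=
    isBigO_of_le _ fun x => (hf x).trans (Real.le_norm_self _)
  rw [hasFDerivAt_iff_isLittleO_nhds_zero]
  simpa [hf0] using hO.trans_isLittleO (isLittleO_norm_rpow_nhds_zero he)

end RpowOrder

theorem natCast_mul_pow_sub_one_mul {R : Type*} [Semiring R] (n : ℕ) (a : R) :
    (n : R) * a ^ (n - 1) * a = n * a ^ n := by
  rcases eq_or_ne n 0 with rfl | hn
  · simp
  · rw [mul_assoc, pow_sub_one_mul hn]

theorem hasFDerivAt_ofReal_norm_sq (t : ℂ) :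
    HasFDerivAt (fun z : ℂ => ((‖z‖ ^ 2 : ℝ) : ℂ))
      (conj t • ContinuousLinearMap.id ℝ ℂ + t • (conjCLE : ℂ →L[ℝ] ℂ)) t := by
  have h := (hasFDerivAt_id (𝕜 := ℝ) t).mul conjCLE.hasFDerivAt
  refine (h.congr_fderiv (add_comm _ _)).congr_of_eventuallyEq (Eventually.of_forall fun z => ?_)
  simp [mul_conj, normSq_eq_norm_sq]

noncomputable def normSqCpowKernel (s : ℂ) (m n : ℕ) (t : ℂ) : ℂ :=
  if t = 0 then 0 else ((‖t‖ ^ 2 : ℝ) : ℂ) ^ s * t ^ m * conj t ^ n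

namespace normSqCpowKernel

variable {s : ℂ} {m n : ℕ}

theorem norm_eq (h : 2 * s.re + m + n ≠ 0) (t : ℂ) :
    ‖normSqCpowKernel s m n t‖ = ‖t‖ ^ (2 * s.re + m + n) := by
  rcases eq_or_ne t 0 with rfl | ht
  · simp [normSqCpowKernel, Real.zero_rpow h]
  have hpos : 0 < ‖t‖ := norm_pos_iff.2 ht
  rw [normSqCpowKernel, if_neg ht, norm_mul, norm_mul, norm_pow, norm_pow, RCLike.norm_conj,
    norm_cpow_eq_rpow_re_of_pos (by positivity), ← Real.rpow_two, ← Real.rpow_mul hpos.le,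
    ← Real.rpow_natCast, ← Real.rpow_natCast, ← Real.rpow_add hpos, ← Real.rpow_add hpos,
    mul_comm 2]

theorem hasFDerivAt_of_ne_zero {t : ℂ} (ht : t ≠ 0) :
    HasFDerivAt (normSqCpowKernel s m n)
      (((s + m) * normSqCpowKernel (s - 1) m (n + 1) t) • ContinuousLinearMap.id ℝ ℂ +
        ((s + n) * normSqCpowKernel (s - 1) (m + 1) n t) • (conjCLE : ℂ →L[ℝ] ℂ)) t := by
  set N : ℂ := ((‖t‖ ^ 2 : ℝ) : ℂ)
  have hN : N = t * conj t := by simp [N, mul_conj, normSq_eq_norm_sq]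
  have hslit : N ∈ slitPlane := ofReal_mem_slitPlane.2 (by positivity)
  have hcpow : N ^ s = N ^ (s - 1) * N := by
    conv_lhs => rw [← sub_add_cancel s 1, cpow_add _ _ (slitPlane_ne_zero hslit), cpow_one]
  have h := (((hasStrictDerivAt_cpow_const (c := s) hslit).hasDerivAt.comp_hasFDerivAt t
    (hasFDerivAt_ofReal_norm_sq t)).mul (hasFDerivAt_pow m (x := t))).mul
    (conjCLE.hasFDerivAt.pow n)
  have hK : (fun z => ((‖z‖ ^ 2 : ℝ) : ℂ) ^ s * z ^ m * conj z ^ n) =ᶠ[𝓝 t]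
      normSqCpowKernel s m n := by
    filter_upwards [eventually_ne_nhds ht] with z hz
    rw [normSqCpowKernel, if_neg hz]
  refine (h.congr_of_eventuallyEq hK.symm).congr_fderiv ?_
  ext v
  simp only [Pi.mul_apply, Function.comp_apply, ContinuousAlgEquiv.coeCLE_apply, conjCAE_apply,
    nsmul_eq_mul, smul_add, add_apply, smul_apply,
    ContinuousLinearEquiv.coe_coe, smul_eq_mul, ContinuousLinearMap.id_apply, normSqCpowKernel,
    ht, if_false]
  rw [show ((‖t‖ ^ 2 : ℝ) : ℂ) = N from rfl]
  have hm := natCast_mul_pow_sub_one_mul m t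
  have hn := natCast_mul_pow_sub_one_mul n (conj t)
  linear_combination (t ^ m * n * conj t ^ (n - 1) * conj v + t ^ (m - 1) * conj t ^ n * m * v) *
      (hcpow + N ^ (s - 1) * hN) + N ^ (s - 1) * t * t ^ m * conj v * hn +
    N ^ (s - 1) * conj t ^ (n + 1) * v * hm

theorem hasFDerivAt (h : 1 < 2 * s.re + m + n) (t : ℂ) :
    HasFDerivAt (normSqCpowKernel s m n)
      (((s + m) * normSqCpowKernel (s - 1) m (n + 1) t) • ContinuousLinearMap.id ℝ ℂ +
        ((s + n) * normSqCpowKernel (s - 1) (m + 1) n t) • (conjCLE : ℂ →L[ℝ] ℂ)) t := by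
  rcases eq_or_ne t 0 with rfl | ht
  · have hbound t := (norm_eq (s := s) (m := m) (n := n) (by linarith) t).le
    refine (hasFDerivAt_zero_of_norm_le_rpow h hbound).congr_fderiv ?_
    ext v
    simp [normSqCpowKernel]
  · exact hasFDerivAt_of_ne_zero ht

theorem continuous (h : 0 < 2 * s.re + m + n) : Continuous (normSqCpowKernel s m n) := by
  refine continuous_iff_continuousAt.2 fun t => ?_
  rcases eq_or_ne t 0 with rfl | ht
  · exact continuousAt_zero_of_norm_le_rpow h fun t => (norm_eq h.ne' t).le
  · exact (hasFDerivAt_of_ne_zero ht).continuousAt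

theorem contDiff (k : ℕ) (h : k < 2 * s.re + m + n) : ContDiff ℝ k (normSqCpowKernel s m n) := by
  induction k generalizing s m n with
  | zero => exact contDiff_zero.2 (continuous (by simpa using h))
  | succ k ih =>
    push_cast at h
    have h₁ : (k : ℝ) < 2 * (s - 1).re + m + (n + 1 : ℕ) := by push_cast [sub_re, one_re]; linarith
    have h₂ : (k : ℝ) < 2 * (s - 1).re + (m + 1 : ℕ) + n := by push_cast [sub_re, one_re]; linarith
    have h₀ : 1 < 2 * s.re + m + n := by linarith [k.cast_nonneg (α := ℝ)]
    refine contDiff_succ_iff_hasFDerivAt.2 ⟨_, ?_, hasFDerivAt h₀⟩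
    exact ((contDiff_const.mul (ih h₁)).smul contDiff_const).add
      ((contDiff_const.mul (ih h₂)).smul contDiff_const)

end normSqCpowKernel

/-- Regularity of the kernels: if `2 Re s + m > k` then `t ↦ (|t|²)^s t^m` (extended by `0`
at the origin) is of class `C^k` on `ℂ` viewed as a real manifold, and similarly for
`t ↦ (|t|²)^s t̄^m`. -/
theorem kernel_contDiff (m k : ℕ) (s : ℂ) (h : 2 * s.re + (m : ℝ) > (k : ℝ)) :
    ContDiff ℝ (k : ℕ∞)
        (fun t : ℂ => if t = 0 then 0 else ((‖t‖ ^ 2 : ℝ) : ℂ) ^ s * t ^ m) ∧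
      ContDiff ℝ (k : ℕ∞)
        (fun t : ℂ => if t = 0 then 0 else ((‖t‖ ^ 2 : ℝ) : ℂ) ^ s * ((starRingEnd ℂ) t) ^ m) := by
  constructor
  · convert normSqCpowKernel.contDiff (n := 0) k (by simpa using h) using 2 with t <;>
      simp [normSqCpowKernel]
  · convert normSqCpowKernel.contDiff (m := 0) k (by simpa using h) using 2 with t <;>
      simp [normSqCpowKernel]
end

section
/- Let R be a commutative ring, M an R-module, p ∈ ℕ, and N : M → M an R-linear endomorphism with N^{p+1} = 0. Define the R-linear map T : M^{p+1} → M^{p+1} on tuples (m_0, …, m_p) by (T m)_k = N(m_k) − m_{k+1} for 0 ≤ k ≤ p, with the convention m_{p+1} = 0, and define S : M^{p+1} → M by S(m_0, …, m_p) = Σ_{k=0}^{p} N^k(m_{p−k}). Then S is surjective and ker S = range T; in particular S induces an R-module isomorphism coker T ≅ M. -/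
/-- Identification of `M` with the cokernel of the map `T` on `M^{p+1}` sending
`(m_0, …, m_p)` to `(N m_0 - m_1, …, N m_{p-1} - m_p, N m_p)`, when `N^{p+1} = 0`:
the map `S : (m_0, …, m_p) ↦ Σ_{k=0}^p N^k m_{p-k}` is surjective with kernel exactly the
range of `T`, so `S` induces an isomorphism `coker T ≅ M`. -/
theorem cokernel_identification {R : Type*} [CommRing R] {M : Type*} [AddCommGroup M]
    [Module R M] (p : ℕ) (N : Module.End R M) (hN : N ^ (p + 1) = 0)
    (T : (Fin (p + 1) → M) → (Fin (p + 1) → M))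
    (hT : ∀ (m : Fin (p + 1) → M) (k : Fin (p + 1)),
      T m k = N (m k) - if h : (k : ℕ) + 1 < p + 1 then m ⟨(k : ℕ) + 1, h⟩ else 0)
    (S : (Fin (p + 1) → M) → M)
    (hS : ∀ m : Fin (p + 1) → M, S m = ∑ k : Fin (p + 1), (N ^ (k : ℕ)) (m k.rev)) :
    Function.Surjective S ∧ {m | S m = 0} = Set.range T := by
  constructor
  · intro x
    refine ⟨fun j => if j = Fin.last p then x else 0, ?_⟩
    rw [hS, Fintype.sum_eq_single (0 : Fin (p + 1))]
    · simp
    · intro k hk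
      have h1 : k.rev ≠ Fin.last p := by
        intro h
        apply hk
        have := Fin.rev_injective (a₁ := k) (a₂ := 0) (by simpa using h)
        exact this
      simp [h1]
  · ext m
    simp only [Set.mem_setOf_eq, Set.mem_range]
    constructor
    · intro hm
      set m' : ℕ → M := fun j => if h : j < p + 1 then m ⟨j, h⟩ else 0 with hm'def
      -- key identity from S m = 0
      rw [hS] at hm
      have hterm : ∀ k : Fin (p + 1), (N ^ (k : ℕ)) (m k.rev)
          = (fun c => (N ^ c) (m' (p - c))) (k : ℕ) := by
        intro k
        have h1 : (k.rev : ℕ) = p - (k : ℕ) := by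
          rw [Fin.val_rev]; omega
        have h2 : m' (p - (k : ℕ)) = m k.rev := by
          simp only [hm'def]
          rw [dif_pos (by omega)]
          congr 1
          exact Fin.ext h1.symm
        simp [h2]
      have key : ∑ j ∈ Finset.range (p + 1), (N ^ (p - j)) (m' j) = 0 := by
        have h3 : ∑ j ∈ Finset.range (p + 1),
            (fun c => (N ^ c) (m' (p - c))) (p + 1 - 1 - j)
            = ∑ j ∈ Finset.range (p + 1), (fun c => (N ^ c) (m' (p - c))) j :=
          Finset.sum_range_reflect (fun c => (N ^ c) (m' (p - c))) (p + 1)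
        have h4 : ∑ j ∈ Finset.range (p + 1), (fun c => (N ^ c) (m' (p - c))) j = 0 := by
          rw [← Fin.sum_univ_eq_sum_range]
          rw [← Finset.sum_congr rfl (fun k _ => hterm k)]
          exact hm
        rw [← h3] at h4
        rw [← h4]
        apply Finset.sum_congr rfl
        intro j hj
        simp only [Finset.mem_range] at hj
        simp only
        have e1 : p + 1 - 1 - j = p - j := by omega
        rw [e1]
        have e2 : p - (p - j) = j := by omega
        rw [e2]
      refine ⟨fun k => -∑ j ∈ Finset.range (k : ℕ), (N ^ ((k : ℕ) - 1 - j)) (m' j), ?_⟩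
      funext k
      rw [hT]
      simp only
      have hNx : N (-∑ j ∈ Finset.range (k : ℕ), (N ^ ((k : ℕ) - 1 - j)) (m' j))
          = -∑ j ∈ Finset.range (k : ℕ), (N ^ ((k : ℕ) - j)) (m' j) := by
        rw [map_neg, map_sum]
        congr 1
        apply Finset.sum_congr rfl
        intro j hj
        simp only [Finset.mem_range] at hj
        have h5 : (k : ℕ) - j = ((k : ℕ) - 1 - j) + 1 := by omega
        rw [h5, pow_succ']
        rfl
      rw [hNx]
      by_cases hk : (k : ℕ) + 1 < p + 1
      · rw [dif_pos hk]
        have h6 : -∑ j ∈ Finset.range ((k : ℕ) + 1), (N ^ (((k : ℕ) + 1) - 1 - j)) (m' j)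
            = -(∑ j ∈ Finset.range (k : ℕ), (N ^ ((k : ℕ) - j)) (m' j)) - m k := by
          rw [Finset.sum_range_succ]
          have h7 : ∀ j, ((k : ℕ) + 1) - 1 - j = (k : ℕ) - j := fun j => by omega
          simp only [h7]
          have h8 : m' (k : ℕ) = m k := by
            simp only [hm'def]
            rw [dif_pos k.isLt]
          rw [Nat.sub_self, pow_zero, h8]
          simp only [Module.End.one_apply]
          abel
        rw [h6]
        abel
      · rw [dif_neg hk]
        have hkp : (k : ℕ) = p := by omega
        rw [Finset.sum_range_succ] at key
        have h8 : m' p = m k := by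
          simp only [hm'def]
          rw [dif_pos (by omega)]
          congr 1
          exact Fin.ext hkp.symm
        rw [Nat.sub_self, pow_zero] at key
        simp only [Module.End.one_apply] at key
        rw [hkp]
        have h9 : ∀ j ∈ Finset.range p, (N ^ (p - 1 - j)) (m' j) = (N ^ (p - 1 - j)) (m' j) :=
          fun _ _ => rfl
        have h10 : ∑ j ∈ Finset.range p, (N ^ (p - j)) (m' j) = -m' p := by
          linear_combination (norm := abel) key
        calc (-∑ j ∈ Finset.range p, (N ^ (p - j)) (m' j)) - 0
            = m' p := by rw [h10]; abel
          _ = m k := h8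
    · rintro ⟨x, rfl⟩
      rw [hS]
      set x' : ℕ → M := fun j => if h : j < p + 1 then x ⟨j, h⟩ else 0 with hx'def
      have hterm : ∀ k : Fin (p + 1), (N ^ (k : ℕ)) (T x k.rev)
          = (fun c => (N ^ c) (x' (p + 1 - c))) ((k : ℕ) + 1)
            - (fun c => (N ^ c) (x' (p + 1 - c))) (k : ℕ) := by
        intro k
        rw [hT]
        have hrev : (k.rev : ℕ) = p - (k : ℕ) := by rw [Fin.val_rev]; omega
        have h1 : x k.rev = x' (p - (k : ℕ)) := by
          simp only [hx'def]
          rw [dif_pos (by omega)]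
          congr 1
          exact Fin.ext hrev
        have h2 : (if h : (k.rev : ℕ) + 1 < p + 1 then x ⟨(k.rev : ℕ) + 1, h⟩ else 0)
            = x' (p + 1 - (k : ℕ)) := by
          simp only [hx'def]
          by_cases hc : (k.rev : ℕ) + 1 < p + 1
          · rw [dif_pos hc, dif_pos (by omega)]
            congr 1
            exact Fin.ext (by simp only [hrev] at hc ⊢; omega)
          · rw [dif_neg hc, dif_neg (by omega)]
        rw [h1, h2, map_sub]
        simp only
        congr 1
        · have e3 : p + 1 - ((k : ℕ) + 1) = p - (k : ℕ) := by omega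
          rw [← Module.End.mul_apply, ← pow_succ, e3]
      rw [Finset.sum_congr rfl (fun k _ => hterm k)]
      rw [Fin.sum_univ_eq_sum_range
        (fun c => (fun c => (N ^ c) (x' (p + 1 - c))) (c + 1)
          - (fun c => (N ^ c) (x' (p + 1 - c))) c)]
      rw [Finset.sum_range_sub (fun c => (N ^ c) (x' (p + 1 - c)))]
      rw [Nat.sub_self, hN]
      have h0 : x' (p + 1 - 0) = 0 := by
        simp only [hx'def, Nat.sub_zero]
        rw [dif_neg (by omega)]
      rw [h0]
      simp
end
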